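/- The matching M that arises from {u_i t_i : i ∈ [n]} by adding, for each j ∈ [m], an edge between v_j and one of its neighbors in C_j, is a uniquely restricted matching in G(Γ) of size n+m; indeed, every edge of M is a pendant edge in G(M). -/

import Mathlib

open SimpleGraph

/-- The subgraph of `G` consisting of those pairs in `s` that are actually edges of `G`. -/
def pairsSubgraph {V : Type*} (G : SimpleGraph V) (s : Set (V × V)) : G.Subgraph where
  verts := {v | ∃ a b, (G.Adj a b ∧ ((a, b) ∈ s ∨ (b, a) ∈ s)) ∧ (v = a ∨ v = b)}
  Adj a b := G.Adj a b ∧ ((a, b) ∈ s ∨ (b, a) ∈ s)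
  adj_sub h := h.1
  edge_vert h := ⟨_, _, h, Or.inl rfl⟩
  symm := ⟨fun _ _ h => ⟨h.1.symm, h.2.symm⟩⟩

/-- `M` is an induced matching in `G`: it is a matching, and `G(M)`, the subgraph of `G`
induced by the set `V(M)` of covered vertices (which is `M.verts` for a matching subgraph),
is `1`-regular, i.e. every vertex of `G(M)` has exactly one neighbour in `G(M)`. -/
def IsInducedMatching {V : Type*} (G : SimpleGraph V) (M : G.Subgraph) : Prop :=
  M.IsMatching ∧ ∀ v : M.verts, ∃! w : M.verts, (G.induce M.verts).Adj v w

/-- `M` is an acyclic matching in `G`: it is a matching and `G(M)` is a forest. -/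
def IsAcyclicMatching {V : Type*} (G : SimpleGraph V) (M : G.Subgraph) : Prop :=
  M.IsMatching ∧ (G.induce M.verts).IsAcyclic

/-- `M` is a uniquely restricted matching in `G`: it is a matching and it is the unique
perfect matching of `G(M)`, i.e. the unique matching of `G` covering exactly `M.verts`. -/
def IsURMatching {V : Type*} (G : SimpleGraph V) (M : G.Subgraph) : Prop :=
  M.IsMatching ∧ ∀ M' : G.Subgraph, M'.IsMatching → M'.verts = M.verts → M' = M

/-- The (ordinary) matching number `ν(G)`: the maximum cardinality of a matching in `G`. -/
noncomputable def nuMatch {V : Type*} (G : SimpleGraph V) : ℕ :=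
  sSup {k : ℕ | ∃ M : G.Subgraph, M.IsMatching ∧ M.edgeSet.ncard = k}

/-- The uniquely restricted matching number `ν_ur(G)`. -/
noncomputable def nuUR {V : Type*} (G : SimpleGraph V) : ℕ :=
  sSup {k : ℕ | ∃ M : G.Subgraph, IsURMatching G M ∧ M.edgeSet.ncard = k}

/-- The acyclic matching number `ν_ac(G)`. -/
noncomputable def nuAc {V : Type*} (G : SimpleGraph V) : ℕ :=
  sSup {k : ℕ | ∃ M : G.Subgraph, IsAcyclicMatching G M ∧ M.edgeSet.ncard = k}

/-- The induced (strong) matching number `ν_s(G)`. -/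
noncomputable def nuS {V : Type*} (G : SimpleGraph V) : ℕ :=
  sSup {k : ℕ | ∃ M : G.Subgraph, IsInducedMatching G M ∧ M.edgeSet.ncard = k}

/-- `cyc` is an `M`-alternating cycle in `G`: a cycle of `G` whose edges alternate between
edges of `M` and edges of `E(G) \ M`. -/
def IsAltCycle {V : Type*} (G : SimpleGraph V) (M : G.Subgraph) {v : V}
    (cyc : G.Walk v v) : Prop :=
  cyc.IsCycle ∧ cyc.toSubgraph.spanningCoe.IsAlternating M.spanningCoe

/-- Vertices of the graph `G(Γ)` for the EXACT SATISFIABILITY instance `Γ` with `n` variables and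
`m` clauses (all literals positive): `Sum.inl (i, 0) = t_i`, `Sum.inl (i, 1) = f_i`,
`Sum.inl (i, 2) = u_i` are the vertices of the star `X_i ≅ K_{1,2}` with centre `u_i`;
`Sum.inr (j, none) = v_j` is the centre of the star `C_j ≅ K_{1,3}` and `Sum.inr (j, some i)` is
the leaf of `C_j` identified with the literal `x_i` (it is isolated unless `x_i ∈ c_j`). -/
abbrev XSatV (n m : ℕ) : Type := (Fin n × Fin 3) ⊕ (Fin m × Option (Fin n))

/-- The base relation for `G(Γ)`: the star edges `u_i f_i`, `u_i t_i` and `v_j w` for each leaf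
`w` of `C_j`; an edge from `f_i` to every vertex of `W` (the leaves identified with the literal
`x_i`), and an edge from `t_i` to every vertex of `W'` (the leaves of those stars `C_j` that meet
`W`, which are not in `W`). -/
def xsatRel {n m : ℕ} (c : Fin m → Finset (Fin n)) : XSatV n m → XSatV n m → Prop
  | Sum.inl (i, k), Sum.inl (i', k') => i = i' ∧ k = 2 ∧ k' ≠ 2
  | Sum.inr (j, o), Sum.inr (j', o') => j = j' ∧ o = none ∧ ∃ i, o' = some i ∧ i ∈ c j
  | Sum.inl (i, k), Sum.inr (j, o) =>
      (k = 1 ∧ o = some i ∧ i ∈ c j) ∨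
      (k = 0 ∧ ∃ i', o = some i' ∧ i' ∈ c j ∧ i ∈ c j ∧ i' ≠ i)
  | Sum.inr _, Sum.inl _ => False

/-- The graph `G(Γ)` built from the EXACT SATISFIABILITY instance `Γ` whose clauses are given
by `c`. -/
def xsatGraph {n m : ℕ} (c : Fin m → Finset (Fin n)) : SimpleGraph (XSatV n m) :=
  SimpleGraph.fromRel (xsatRel c)

/-- The matching arising from `{u_i t_i : i ∈ [n]}` by adding, for each `j ∈ [m]`, the edge
between `v_j` and its neighbour `Sum.inr (j, some (g j))` in `C_j`. -/
def M11 {n m : ℕ} (c : Fin m → Finset (Fin n)) (g : Fin m → Fin n) : (xsatGraph c).Subgraph :=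
  pairsSubgraph (xsatGraph c)
    ({pr | ∃ i : Fin n, pr = (Sum.inl (i, 2), Sum.inl (i, 0))} ∪
     {pr | ∃ j : Fin m, pr = (Sum.inr (j, none), Sum.inr (j, some (g j)))})
/-!
Every edge of `M` has an endpoint whose only neighbour in `G(M)` is its partner: the neighbours
of `u_i` are `t_i` and `f_i`, and `f_i` is not covered, while the neighbours of `v_j` are the
leaves of `C_j`, of which only the chosen one is covered. A perfect matching of `G(M)` must match
such a pendant vertex to its unique neighbour, so it contains every edge of `M`, and two matchings
covering the same vertices, one containing the other, coincide.
-/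

section General

variable {V : Type*} {G : SimpleGraph V}

lemma pairsSubgraph_verts_eq_support (s : Set (V × V)) :
    (pairsSubgraph G s).verts = (pairsSubgraph G s).support := by
  refine subset_antisymm ?_ (pairsSubgraph G s).support_subset_verts
  rintro v ⟨a, b, hab, rfl | rfl⟩
  exacts [⟨b, hab⟩, ⟨a, (pairsSubgraph G s).adj_symm hab⟩]

lemma edgeSet_pairsSubgraph (s : Set (V × V)) :
    (pairsSubgraph G s).edgeSet = G.edgeSet ∩ Sym2.mk.uncurry '' s := by
  ext ⟨a, b⟩
  simp only [Subgraph.mem_edgeSet, pairsSubgraph]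
  aesop

lemma existsUnique_induce_adj {s : Set V} {a b : V} (ha : a ∈ s) (hb : b ∈ s) (hab : G.Adj a b)
    (hunique : ∀ x ∈ s, G.Adj a x → x = b) : ∃! w : s, (G.induce s).Adj ⟨a, ha⟩ w :=
  ⟨⟨b, hb⟩, hab, fun w hw => Subtype.ext (hunique w w.2 hw)⟩

lemma adj_of_verts_eq_of_existsUnique_induce_adj {M M' : G.Subgraph} (hM' : M'.IsMatching)
    (hV : M'.verts = M.verts) {a b : V} (hab : M.Adj a b)
    (ha : ∃! w, (G.induce M.verts).Adj ⟨a, M.edge_vert hab⟩ w) : M'.Adj a b := by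
  obtain ⟨x, hax, -⟩ := hM' (hV ▸ M.edge_vert hab)
  have hx : x ∈ M.verts := hV ▸ M'.edge_vert hax.symm
  obtain rfl : x = b := congrArg Subtype.val <|
    ha.unique (y₁ := ⟨x, hx⟩) (y₂ := ⟨b, M.edge_vert hab.symm⟩)
      (M'.adj_sub hax) (M.adj_sub hab)
  exact hax

theorem isURMatching_of_forall_adj_pendant {M : G.Subgraph} (hM : M.IsMatching)
    (hpendant : ∀ a b (hab : M.Adj a b),
      (∃! w, (G.induce M.verts).Adj ⟨a, M.edge_vert hab⟩ w) ∨
      (∃! w, (G.induce M.verts).Adj ⟨b, M.edge_vert hab.symm⟩ w)) :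
    IsURMatching G M := by
  refine ⟨hM, fun M' hM' hV => ?_⟩
  have hle : ∀ {a b}, M.Adj a b → M'.Adj a b := fun hab =>
    (hpendant _ _ hab).elim (adj_of_verts_eq_of_existsUnique_induce_adj hM' hV hab)
      fun hb => (adj_of_verts_eq_of_existsUnique_induce_adj hM' hV hab.symm hb).symm
  refine Subgraph.ext hV (funext₂ fun a b => propext ⟨fun h => ?_, hle⟩)
  obtain ⟨b', hab', -⟩ := hM (hV ▸ M'.edge_vert h)
  rwa [hM'.eq_of_adj_left h (hle hab')]

end General

section XSat

variable {n m : ℕ} {c : Fin m → Finset (Fin n)} {g : Fin m → Fin n}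

lemma xsatGraph_adj_u_iff {i : Fin n} {x : XSatV n m} :
    (xsatGraph c).Adj (Sum.inl (i, 2)) x ↔ x = Sum.inl (i, 0) ∨ x = Sum.inl (i, 1) := by
  rcases x with ⟨i', k⟩ | ⟨j, o⟩
  · simp [xsatGraph, xsatRel]
    omega
  · simp [xsatGraph, xsatRel]

lemma xsatGraph_adj_v_iff {j : Fin m} {x : XSatV n m} :
    (xsatGraph c).Adj (Sum.inr (j, none)) x ↔ ∃ i ∈ c j, x = Sum.inr (j, some i) := by
  rcases x with ⟨i', k⟩ | ⟨j', o⟩ <;> aesop (add simp [xsatGraph, xsatRel])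

def m11Edge (g : Fin m → Fin n) : Fin n ⊕ Fin m → Sym2 (XSatV n m) :=
  Sum.elim (fun i => s(Sum.inl (i, 2), Sum.inl (i, 0)))
    (fun j => s(Sum.inr (j, none), Sum.inr (j, some (g j))))

lemma m11Edge_injective : Function.Injective (m11Edge (n := n) g) := by
  rintro (i | j) (i' | j') h <;> simp_all [m11Edge]

lemma edgeSet_M11 (hg : ∀ j, g j ∈ c j) : (M11 c g).edgeSet = Set.range (m11Edge g) := by
  have hpairs : Sym2.mk.uncurry ''
      ({pr | ∃ i : Fin n, pr = ((Sum.inl (i, 2) : XSatV n m), Sum.inl (i, 0))} ∪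
        {pr | ∃ j : Fin m, pr = (Sum.inr (j, none), Sum.inr (j, some (g j)))}) =
      Set.range (m11Edge g) := by
    ext e
    simp [m11Edge, Set.image_union]
  have hedges : Set.range (m11Edge g) ⊆ (xsatGraph c).edgeSet := by
    rintro _ ⟨i | j, rfl⟩
    · exact xsatGraph_adj_u_iff.2 (Or.inl rfl)
    · exact xsatGraph_adj_v_iff.2 ⟨g j, hg j, rfl⟩
  rw [M11, edgeSet_pairsSubgraph, hpairs, Set.inter_eq_right.2 hedges]

lemma M11_adj_iff (hg : ∀ j, g j ∈ c j) {a b : XSatV n m} :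
    (M11 c g).Adj a b ↔ s(a, b) ∈ Set.range (m11Edge g) := by
  rw [← edgeSet_M11 hg, Subgraph.mem_edgeSet]

lemma mem_M11_verts (hg : ∀ j, g j ∈ c j) {x : XSatV n m} :
    x ∈ (M11 c g).verts ↔ (∃ i, x = Sum.inl (i, 2) ∨ x = Sum.inl (i, 0)) ∨
      ∃ j, x = Sum.inr (j, none) ∨ x = Sum.inr (j, some (g j)) := by
  rw [show (M11 c g).verts = (M11 c g).support from pairsSubgraph_verts_eq_support _,
    Subgraph.mem_support]
  simp_rw [M11_adj_iff hg]
  aesop (add simp m11Edge)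

lemma isMatching_M11 (hg : ∀ j, g j ∈ c j) : (M11 c g).IsMatching := by
  intro x hx
  rw [mem_M11_verts hg] at hx
  simp_rw [M11_adj_iff hg]
  rcases hx with ⟨i, rfl | rfl⟩ | ⟨j, rfl | rfl⟩ <;> simp [m11Edge]

lemma ncard_edgeSet_M11 (hg : ∀ j, g j ∈ c j) : (M11 c g).edgeSet.ncard = n + m := by
  rw [edgeSet_M11 hg, Set.ncard_range_of_injective m11Edge_injective]
  simp

lemma existsUnique_induce_M11_adj_u (hg : ∀ j, g j ∈ c j) (i : Fin n)
    (hu : Sum.inl (i, 2) ∈ (M11 c g).verts) :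
    ∃! w, ((xsatGraph c).induce (M11 c g).verts).Adj ⟨Sum.inl (i, 2), hu⟩ w := by
  refine existsUnique_induce_adj _ ((mem_M11_verts hg).2 (Or.inl ⟨i, Or.inr rfl⟩))
    (xsatGraph_adj_u_iff.2 (Or.inl rfl)) fun x hx hux => ?_
  rcases xsatGraph_adj_u_iff.1 hux with rfl | rfl
  · rfl
  · simp [mem_M11_verts hg] at hx

lemma existsUnique_induce_M11_adj_v (hg : ∀ j, g j ∈ c j) (j : Fin m)
    (hv : Sum.inr (j, none) ∈ (M11 c g).verts) :
    ∃! w, ((xsatGraph c).induce (M11 c g).verts).Adj ⟨Sum.inr (j, none), hv⟩ w := by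
  refine existsUnique_induce_adj _ ((mem_M11_verts hg).2 (Or.inr ⟨j, Or.inr rfl⟩))
    (xsatGraph_adj_v_iff.2 ⟨g j, hg j, rfl⟩) fun x hx hvx => ?_
  obtain ⟨i, -, rfl⟩ := xsatGraph_adj_v_iff.1 hvx
  simpa [mem_M11_verts hg] using hx

lemma M11_adj_pendant (hg : ∀ j, g j ∈ c j) (a b : XSatV n m) (hab : (M11 c g).Adj a b) :
    (∃! w, ((xsatGraph c).induce (M11 c g).verts).Adj ⟨a, (M11 c g).edge_vert hab⟩ w) ∨
      ∃! w, ((xsatGraph c).induce (M11 c g).verts).Adj ⟨b, (M11 c g).edge_vert hab.symm⟩ w := by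
  obtain ⟨i | j, he⟩ := (M11_adj_iff hg).1 hab <;>
    rcases Sym2.eq_iff.1 he with ⟨rfl, rfl⟩ | ⟨rfl, rfl⟩
  · exact Or.inl (existsUnique_induce_M11_adj_u hg i _)
  · exact Or.inr (existsUnique_induce_M11_adj_u hg i _)
  · exact Or.inl (existsUnique_induce_M11_adj_v hg j _)
  · exact Or.inr (existsUnique_induce_M11_adj_v hg j _)

end XSat

theorem m11_isURMatching_general {n m : ℕ} (c : Fin m → Finset (Fin n))
    (g : Fin m → Fin n) (hg : ∀ j, g j ∈ c j) :
    IsURMatching (xsatGraph c) (M11 c g) ∧ (M11 c g).edgeSet.ncard = n + m ∧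
      ∀ a b (hab : (M11 c g).Adj a b),
        (∃! w, ((xsatGraph c).induce (M11 c g).verts).Adj ⟨a, (M11 c g).edge_vert hab⟩ w) ∨
        (∃! w, ((xsatGraph c).induce (M11 c g).verts).Adj ⟨b, (M11 c g).edge_vert hab.symm⟩ w) :=
  ⟨isURMatching_of_forall_adj_pendant (isMatching_M11 hg) (M11_adj_pendant hg),
    ncard_edgeSet_M11 hg, M11_adj_pendant hg⟩

/-- The matching arising from `{u_i t_i : i ∈ [n]}` by adding, for each `j ∈ [m]`, an edge
between `v_j` and one of its neighbours, is a uniquely restricted matching in `G(Γ)` of size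
`n + m`; indeed, every edge of this matching is a pendant edge in `G(M)`, i.e. has an endpoint
of degree `1` in `G(M)`. -/
theorem m11_isURMatching {n m : ℕ} (c : Fin m → Finset (Fin n))
    (hcard : ∀ j, (c j).card = 3)
    (hocc : ∀ i : Fin n, (Finset.univ.filter fun j => i ∈ c j).card ≤ 3)
    (g : Fin m → Fin n) (hg : ∀ j, g j ∈ c j) :
    IsURMatching (xsatGraph c) (M11 c g) ∧ (M11 c g).edgeSet.ncard = n + m ∧
      ∀ a b (hab : (M11 c g).Adj a b),
        (∃! w, ((xsatGraph c).induce (M11 c g).verts).Adj ⟨a, (M11 c g).edge_vert hab⟩ w) ∨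
        (∃! w, ((xsatGraph c).induce (M11 c g).verts).Adj ⟨b, (M11 c g).edge_vert hab.symm⟩ w) :=
  m11_isURMatching_general c g hg
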